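/- Let G = (V, E) be a finite simple undirected graph, let T ⊆ V be a nonempty set of terminals, let t₁ ∈ T, let k be a natural number, and let w : V → ℕ be a weight function. For every w₀ ∈ ℕ, the number of triples (X, X_L, X_R) such that T ⊆ X ⊆ V, |X| = k, w(X) = w₀, (X_L, X_R) is a consistent cut of G[X], and t₁ ∈ X_L, is congruent modulo 2 to the number of sets X such that T ⊆ X ⊆ V, |X| = k, w(X) = w₀, and G[X] is connected. -/

import Mathlib

/-!
A consistent cut `(X_L, X_R)` of `G[X]` with `t₁ ∈ X_L` is determined by `X_L`, a subset of `X`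
containing `t₁` that no edge of `G[X]` leaves. If `G[X]` is connected, `X_L = X` is the only
choice. Otherwise let `C` be the vertex set of a connected component of `G[X]` avoiding `t₁`:
`X_L ↦ X_L ∆ C` is a fixed-point-free involution on these sets, so there is an even number of
them. Summing over `X` gives the congruence.
-/

/-- `(XL, XR)` is a consistent cut of the subgraph of `G` induced by `X`:
it partitions `X` and no edge of `G` joins a vertex of `XL` to a vertex of `XR`. -/
def ConsCut {V : Type} [DecidableEq V] (G : SimpleGraph V) (X XL XR : Finset V) : Prop :=
  XL ∪ XR = X ∧ Disjoint XL XR ∧ ∀ u ∈ XL, ∀ v ∈ XR, ¬ G.Adj u v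

open Finset

theorem Set.ncard_setOf_prod_eq_sum {α β : Type*} [Fintype α] [Fintype β] (P : α → Prop)
    [DecidablePred P] (Q : α → β → Prop) :
    {t : α × β | P t.1 ∧ Q t.1 t.2}.ncard =
      ∑ a ∈ Finset.univ.filter P, {b | Q a b}.ncard := by
  classical
  simp only [Set.ncard_eq_toFinset_card', Set.toFinset_ofPred, card_filter,
    Fintype.sum_prod_type, ite_and]
  simp [sum_ite_irrel, sum_filter]

theorem Set.even_ncard_of_involution {α : Type*} {s : Set α} (hs : s.Finite) (g : α → α)
    (hg : ∀ a ∈ s, g a ∈ s) (hgg : ∀ a ∈ s, g (g a) = a) (hfix : ∀ a ∈ s, g a ≠ a) :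
    Even s.ncard := by
  rw [Set.ncard_eq_toFinset_card s hs, ← ZMod.natCast_eq_zero_iff_even, card_eq_sum_ones,
    Nat.cast_sum]
  refine sum_involution (fun a _ => g a) (fun _ _ => by decide) (fun a ha _ => ?_)
    (fun a ha => ?_) (fun a ha => ?_) <;> rw [Set.Finite.mem_toFinset] at ha
  exacts [hfix a ha, (Set.Finite.mem_toFinset hs).mpr (hg a ha), hgg a ha]

namespace SimpleGraph

variable {V : Type} {G : SimpleGraph V}

variable (G) in
def AdjClosedOn (X S : Finset V) : Prop :=
  ∀ u ∈ X, ∀ v ∈ X, G.Adj u v → (u ∈ S ↔ v ∈ S)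

variable {X S C : Finset V}

theorem AdjClosedOn.mem_of_reachable (hS : G.AdjClosedOn X S) {a b : (X : Set V)}
    (hab : (G.induce (X : Set V)).Reachable a b) (ha : (a : V) ∈ S) : (b : V) ∈ S := by
  obtain ⟨p⟩ := hab
  induction p with
  | nil => exact ha
  | @cons u v _ huv _ ih => exact ih ((hS u u.2 v v.2 huv).mp ha)

theorem AdjClosedOn.eq_of_connected (hS : G.AdjClosedOn X S) (hSX : S ⊆ X) {t : V} (ht : t ∈ S)
    (hconn : (G.induce (X : Set V)).Connected) : S = X :=
  hSX.antisymm fun x hx =>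
    hS.mem_of_reachable (a := ⟨t, hSX ht⟩) (b := ⟨x, hx⟩) (hconn _ _) ht

theorem exists_adjClosedOn_of_not_connected {t : V} (ht : t ∈ X)
    (hconn : ¬ (G.induce (X : Set V)).Connected) :
    ∃ C ⊆ X, C.Nonempty ∧ t ∉ C ∧ G.AdjClosedOn X C := by
  classical
  obtain ⟨v, hv⟩ : ∃ v, ¬ (G.induce (X : Set V)).Reachable ⟨t, ht⟩ v := by
    by_contra! h
    exact hconn ((connected_iff _).mpr ⟨fun a b => (h a).symm.trans (h b), ⟨⟨t, ht⟩⟩⟩)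
  refine ⟨X.filter fun u => ∃ hu : u ∈ X, (G.induce (X : Set V)).Reachable v ⟨u, hu⟩,
    filter_subset _ _, ⟨v, mem_filter.mpr ⟨v.2, v.2, .rfl⟩⟩,
    fun htC => hv (mem_filter.mp htC).2.2.symm, fun u hu w hw huw => ?_⟩
  have hadj : (G.induce (X : Set V)).Adj ⟨u, hu⟩ ⟨w, hw⟩ := huw
  simp only [mem_filter, hu, hw, exists_true_left, true_and]
  exact ⟨fun h => h.trans hadj.reachable, fun h => h.trans hadj.symm.reachable⟩

variable [DecidableEq V]

theorem AdjClosedOn.symmDiff (hS : G.AdjClosedOn X S) (hC : G.AdjClosedOn X C) :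
    G.AdjClosedOn X (symmDiff S C) := by
  intro u hu v hv huv
  simp only [mem_symmDiff, hS u hu v hv huv, hC u hu v hv huv]

theorem consCut_iff {L R : Finset V} :
    ConsCut G X L R ↔ L ⊆ X ∧ R = X \ L ∧ G.AdjClosedOn X L := by
  constructor
  · rintro ⟨rfl, hdisj, hsep⟩
    refine ⟨subset_union_left, (union_sdiff_cancel_left hdisj).symm, fun u hu v hv huv => ?_⟩
    rw [mem_union] at hu hv
    constructor
    · intro huL
      exact hv.resolve_right fun hvR => hsep u huL v hvR huv
    · intro hvL
      exact hu.resolve_right fun huR => hsep v hvL u huR huv.symm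
  · rintro ⟨hLX, rfl, hL⟩
    refine ⟨union_sdiff_of_subset hLX, disjoint_sdiff, fun u hu v hv huv => ?_⟩
    rw [mem_sdiff] at hv
    exact hv.2 ((hL u (hLX hu) v hv.1 huv).mp hu)

theorem ncard_consCut_eq (t : V) :
    {p : Finset V × Finset V | ConsCut G X p.1 p.2 ∧ t ∈ p.1}.ncard =
      {S | S ⊆ X ∧ t ∈ S ∧ G.AdjClosedOn X S}.ncard := by
  rw [← Set.ncard_image_of_injective (f := fun S => (S, X \ S)) _
    fun _ _ h => congrArg Prod.fst h]
  congr 1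
  ext ⟨L, R⟩
  simp only [consCut_iff, Set.mem_ofPred_eq, Set.mem_image, Prod.mk.injEq]
  constructor
  · rintro ⟨⟨hLX, rfl, hL⟩, ht⟩
    exact ⟨L, ⟨hLX, ht, hL⟩, rfl, rfl⟩
  · rintro ⟨S, ⟨hSX, ht, hS⟩, rfl, rfl⟩
    exact ⟨⟨hSX, rfl, hS⟩, ht⟩

theorem ncard_consCut_of_connected {t : V} (ht : t ∈ X)
    (hconn : (G.induce (X : Set V)).Connected) :
    {p : Finset V × Finset V | ConsCut G X p.1 p.2 ∧ t ∈ p.1}.ncard = 1 := by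
  rw [ncard_consCut_eq, Set.ncard_eq_one]
  refine ⟨X, Set.eq_singleton_iff_unique_mem.mpr
    ⟨⟨subset_rfl, ht, fun u hu v hv _ => iff_of_true hu hv⟩, ?_⟩⟩
  rintro S ⟨hSX, htS, hS⟩
  exact hS.eq_of_connected hSX htS hconn

theorem even_ncard_consCut_of_not_connected [Fintype V] {t : V} (ht : t ∈ X)
    (hconn : ¬ (G.induce (X : Set V)).Connected) :
    Even {p : Finset V × Finset V | ConsCut G X p.1 p.2 ∧ t ∈ p.1}.ncard := by
  obtain ⟨C, hCX, ⟨v, hvC⟩, htC, hC⟩ := exists_adjClosedOn_of_not_connected ht hconn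
  rw [ncard_consCut_eq]
  refine Set.even_ncard_of_involution (Set.toFinite _) (fun S => symmDiff S C) ?_
    (fun S _ => symmDiff_symmDiff_cancel_right C S) fun S _ h => ?_
  · rintro S ⟨hSX, htS, hS⟩
    exact ⟨symmDiff_subset_union.trans (union_subset hSX hCX),
      mem_symmDiff.mpr (.inl ⟨htS, htC⟩), hS.symmDiff hC⟩
  · have := congrArg (v ∈ ·) h
    simp [mem_symmDiff, hvC] at this

end SimpleGraph

open SimpleGraph in
theorem steiner_cut_and_count_general {V : Type} [Fintype V] [DecidableEq V] (G : SimpleGraph V)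
    (T : Finset V) (t₁ : V) (ht₁ : t₁ ∈ T)
    (k : ℕ) (w : V → ℕ) (w₀ : ℕ) :
    Set.ncard {t : Finset V × Finset V × Finset V |
        T ⊆ t.1 ∧ t.1.card = k ∧ (∑ u ∈ t.1, w u) = w₀ ∧
        ConsCut G t.1 t.2.1 t.2.2 ∧ t₁ ∈ t.2.1} ≡
      Set.ncard {X : Finset V |
        T ⊆ X ∧ X.card = k ∧ (∑ u ∈ X, w u) = w₀ ∧
        (G.induce (X : Set V)).Connected} [MOD 2] := by
  classical
  set Admissible : Finset V → Prop :=
    fun X => T ⊆ X ∧ X.card = k ∧ (∑ u ∈ X, w u) = w₀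
  have hcuts := Set.ncard_setOf_prod_eq_sum Admissible
    fun X (p : Finset V × Finset V) => ConsCut G X p.1 p.2 ∧ t₁ ∈ p.1
  have hconn : {X | Admissible X ∧ (G.induce (X : Set V)).Connected}.ncard =
      ∑ X ∈ Finset.univ.filter Admissible,
        if (G.induce (X : Set V)).Connected then 1 else 0 := by
    rw [Set.ncard_eq_toFinset_card', Set.toFinset_ofPred, ← filter_filter, card_filter]
  simp only [Admissible, and_assoc] at hcuts hconn
  rw [hcuts, hconn]
  refine Nat.ModEq.sum fun X hX => ?_
  have ht₁X : t₁ ∈ X := (mem_filter.mp hX).2.1 ht₁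
  split_ifs with hconnX
  · rw [ncard_consCut_of_connected ht₁X hconnX]
  · exact Nat.even_iff.mp (even_ncard_consCut_of_not_connected ht₁X hconnX)

/-- Cut&Count correctness for **Steiner Tree**: for terminals `T ≠ ∅`, `t₁ ∈ T`, and every
target weight `w₀`, the number of triples `(X, X_L, X_R)` with `T ⊆ X`, `|X| = k`,
`w(X) = w₀`, `(X_L, X_R)` a consistent cut of `G[X]` and `t₁ ∈ X_L`, is congruent modulo 2
to the number of sets `X` with `T ⊆ X`, `|X| = k`, `w(X) = w₀` and `G[X]` connected. -/
theorem steiner_cut_and_count {V : Type} [Fintype V] [DecidableEq V] (G : SimpleGraph V)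
    (T : Finset V) (hT : T.Nonempty) (t₁ : V) (ht₁ : t₁ ∈ T)
    (k : ℕ) (w : V → ℕ) (w₀ : ℕ) :
    Set.ncard {t : Finset V × Finset V × Finset V |
        T ⊆ t.1 ∧ t.1.card = k ∧ (∑ u ∈ t.1, w u) = w₀ ∧
        ConsCut G t.1 t.2.1 t.2.2 ∧ t₁ ∈ t.2.1} ≡
      Set.ncard {X : Finset V |
        T ⊆ X ∧ X.card = k ∧ (∑ u ∈ X, w u) = w₀ ∧
        (G.induce (X : Set V)).Connected} [MOD 2] :=
  steiner_cut_and_count_general G T t₁ ht₁ k w w₀
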